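/- Let K be a compact subset of {x ∈ ℂ : |x| > 1/r_0}. Then there exists C > 0 such that for every integer n ≥ 1 and every x ∈ K, one has g(1/x) ≠ 0 and | √(2πn) · p_n(n x) · g(1/x) / (e x)^n − 1 | ≤ C/n. -/

import Mathlib

/-!
Let `b j` be the Taylor coefficients of `1/g` at `0`. The Cauchy formula and Leibniz's rule give
`p n z = ∑_{k ≤ n} z^k / k! * b (n - k)`, so with `y = 1/x`
`√(2πn) p_n(nx) / (ex)^n = ∑_{j ≤ n} b j y^j d(n, j)` where
`d(n, j) = √(2πn) n^(n-j) e^(-n) / (n-j)!`.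
Stirling's formula with Robbins' error term and Bernoulli's inequality give
`|d(n, j) - 1| ≤ (j² + 1) / n`, while `∑ b j y^j = 1 / g y` with geometrically decaying terms,
uniformly for `x ∈ K`, by Cauchy's estimate. Hence the difference is `O(1/n)`.
-/

open Finset Real Filter Topology Metric
open scoped Nat

namespace Stirling

theorem stirlingSeq_le_sqrt_pi_mul_exp {n : ℕ} (hn : n ≠ 0) :
    stirlingSeq n ≤ √π * exp (1 / (12 * n)) := by
  -- Robbins' bound makes `log (stirlingSeq k) - 1 / (12 k)` increase, towards `log √π`.
  set u : ℕ → ℝ := fun k ↦ log (stirlingSeq (k + 1)) - 1 / (12 * (k + 1 : ℕ))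
  have hu_mono : Monotone u := monotone_nat_of_le_succ fun k ↦ by
    have := log_stirlingSeq_sdiff_le (k + 1)
    simp only [u]
    push_cast at this ⊢
    rw [show (1 : ℝ) / (12 * (k + 1) * (k + 1 + 1)) = 1 / (12 * (k + 1)) - 1 / (12 * (k + 1 + 1))
      by field_simp; ring] at this
    linarith
  have hu_lim : Tendsto u atTop (𝓝 (log √π - 0)) := by
    refine ((continuousAt_log (by positivity)).tendsto.comp
      (tendsto_stirlingSeq_sqrt_pi.comp (tendsto_add_atTop_nat 1))).sub ?_
    simpa using (tendsto_one_div_add_atTop_nhds_zero_nat (𝕜 := ℝ)).mul_const (12⁻¹ : ℝ)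
  obtain ⟨k, rfl⟩ := Nat.exists_eq_succ_of_ne_zero hn
  have hk := hu_mono.ge_of_tendsto hu_lim k
  simp only [u, sub_zero, tsub_le_iff_right] at hk
  calc stirlingSeq (k + 1) = exp (log (stirlingSeq (k + 1))) := (exp_log (stirlingSeq'_pos k)).symm
    _ ≤ exp (log √π + 1 / (12 * (k + 1 : ℕ))) := exp_le_exp.2 hk
    _ = √π * exp (1 / (12 * (k + 1 : ℕ))) := by rw [exp_add, exp_log (by positivity)]

theorem factorial_le_stirling_mul_exp {n : ℕ} (hn : n ≠ 0) :
    (n ! : ℝ) ≤ √(2 * π * n) * (n / exp 1) ^ n * exp (1 / (12 * n)) := by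
  have h := stirlingSeq_le_sqrt_pi_mul_exp hn
  rw [stirlingSeq, div_le_iff₀ (by positivity)] at h
  calc (n ! : ℝ) ≤ _ := h
    _ = _ := by rw [show (2 * π * n) = π * (2 * n) by ring, sqrt_mul pi_pos.le]; ring

end Stirling

theorem one_sub_descFactorial_div_pow_le {n : ℕ} (hn : n ≠ 0) (j : ℕ) :
    1 - (n.descFactorial j : ℝ) / (n : ℝ) ^ j ≤ (j : ℝ) ^ 2 / n := by
  have hn' : (0 : ℝ) < n := by positivity
  rcases le_or_gt j n with hjn | hnj
  · have hge : (-2 : ℝ) ≤ (1 - j) / n := by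
      rw [le_div_iff₀ hn']; have : (j : ℝ) ≤ n := by exact_mod_cast hjn
      linarith
    have hbern := one_add_mul_le_pow hge j
    have hpow : ((n + 1 - j : ℕ) : ℝ) ^ j ≤ n.descFactorial j := by
      exact_mod_cast Nat.pow_sub_le_descFactorial n j
    have hbase : (1 + (1 - j) / n : ℝ) = ((n + 1 - j : ℕ) : ℝ) / n := by
      rw [Nat.cast_sub (by omega)]; field_simp; push_cast; ring
    rw [hbase, div_pow] at hbern
    have hquad : 1 - (j : ℝ) ^ 2 / n ≤ 1 + j * ((1 - j) / n) := by
      rw [mul_div_assoc', sub_eq_add_neg, ← neg_div]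
      gcongr; nlinarith
    have hratio := div_le_div_of_nonneg_right hpow (pow_pos hn' j).le
    linarith
  · rw [Nat.descFactorial_eq_zero_iff_lt.2 hnj, Nat.cast_zero, zero_div, sub_zero,
      le_div_iff₀ hn', one_mul]
    norm_cast; nlinarith

theorem one_sub_inv_le_stirling_div_factorial {n : ℕ} (hn : n ≠ 0) :
    1 - 1 / n ≤ √(2 * π * n) * (n / exp 1) ^ n / n ! := by
  have hn' : (0 : ℝ) < n := by positivity
  set t : ℝ := 1 / (12 * n)
  have ht : t ≤ 1 / n := div_le_div_of_nonneg_left zero_le_one hn' (by linarith)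
  rw [le_div_iff₀ (by positivity)]
  calc (1 - 1 / n) * (n ! : ℝ) ≤ exp (-t) * n ! := by
        gcongr; linarith [add_one_le_exp (-t)]
    _ ≤ exp (-t) * (√(2 * π * n) * (n / exp 1) ^ n * exp t) := by
        gcongr; exact Stirling.factorial_le_stirling_mul_exp hn
    _ = √(2 * π * n) * (n / exp 1) ^ n := by
        rw [mul_comm, mul_assoc, ← exp_add, add_neg_cancel, exp_zero, mul_one]

/-- The weight `d(n, j)`, written as the Stirling ratio `√(2πn) (n/e)^n / n!` times
`n (n-1) ⋯ (n-j+1) / n^j`; the descending factorial makes it vanish for `j > n`. -/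
noncomputable def stirlingWeight (n j : ℕ) : ℝ :=
  √(2 * π * n) * (n / Real.exp 1) ^ n / n ! * (n.descFactorial j / (n : ℝ) ^ j)

theorem abs_stirlingWeight_sub_one_le {n : ℕ} (hn : n ≠ 0) (j : ℕ) :
    |stirlingWeight n j - 1| ≤ ((j : ℝ) ^ 2 + 1) / n := by
  have hs0 : 0 ≤ √(2 * π * n) * (n / Real.exp 1) ^ n / n ! := by positivity
  have hs1 : √(2 * π * n) * (n / Real.exp 1) ^ n / n ! ≤ 1 :=
    div_le_one_of_le₀ (Stirling.le_factorial_stirling n) (by positivity)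
  have hD0 : 0 ≤ (n.descFactorial j : ℝ) / (n : ℝ) ^ j := by positivity
  have hD1 : (n.descFactorial j : ℝ) / (n : ℝ) ^ j ≤ 1 :=
    div_le_one_of_le₀ (by exact_mod_cast Nat.descFactorial_le_pow n j) (by positivity)
  have hs := one_sub_inv_le_stirling_div_factorial hn
  have hD := one_sub_descFactorial_div_pow_le hn j
  -- for `s, D ∈ [0, 1]`: `0 ≤ 1 - s D ≤ (1 - s) + (1 - D)`
  rw [stirlingWeight, abs_sub_comm, abs_of_nonneg (by nlinarith), add_div, add_comm]
  nlinarith [mul_nonneg (sub_nonneg.2 hs1) (sub_nonneg.2 hD1)]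

open Complex

noncomputable def taylorCoeff (f : ℂ → ℂ) (j : ℕ) : ℂ := (j ! : ℂ)⁻¹ * iteratedDeriv j f 0

noncomputable def appellPoly (b : ℕ → ℂ) (n : ℕ) (z : ℂ) : ℂ :=
  ∑ k ∈ range (n + 1), z ^ k / k ! * b (n - k)

theorem circleIntegral_cexp_mul_div_pow {f : ℂ → ℂ} {R : ℝ} (hR : 0 < R)
    (hf : DifferentiableOn ℂ f (closedBall 0 R)) (x : ℂ) (n : ℕ) :
    ∮ t in C(0, R), cexp (x * t) * f t / t ^ (n + 1) =
      2 * π * I * appellPoly (taylorCoeff f) n x := by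
  have hF : DifferentiableOn ℂ (fun t ↦ cexp (x * t) * f t) (closedBall 0 R) :=
    ((differentiable_id.const_mul x).cexp.differentiableOn).mul hf
  have hf0 : ContDiffAt ℂ n f 0 :=
    ((hf.mono ball_subset_closedBall).contDiffOn isOpen_ball).contDiffAt (ball_mem_nhds 0 hR)
  have hexp : ContDiffAt ℂ n (fun t ↦ cexp (x * t)) 0 := by fun_prop
  have hcauchy := hF.circleIntegral_one_div_sub_center_pow_smul hR n
  simp only [sub_zero, smul_eq_mul] at hcauchy
  rw [show (fun t ↦ cexp (x * t) * f t) = (fun t ↦ cexp (x * t)) * f from rfl,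
    iteratedDeriv_mul hexp hf0] at hcauchy
  simp only [iteratedDeriv_cexp_const_mul, mul_zero, Complex.exp_zero, mul_one] at hcauchy
  calc _ = ∮ t in C(0, R), 1 / t ^ (n + 1) * (cexp (x * t) * f t) := by
        congr 1; ext t; ring
    _ = _ := by
      rw [hcauchy, appellPoly, div_mul_eq_mul_div, mul_sum, mul_sum, sum_div]
      refine sum_congr rfl fun k hk ↦ ?_
      rw [Nat.cast_choose ℂ (Nat.le_of_lt_succ (mem_range.1 hk)), taylorCoeff]
      field_simp
      rw [mul_assoc, mul_assoc, mul_div_mul_left _ _ (Nat.cast_ne_zero.2 n.factorial_ne_zero)]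

theorem appellPoly_taylorCoeff_inv_eq_circleIntegral {g : ℂ → ℂ} {ε : ℝ} (hε : 0 < ε)
    (hg : DifferentiableOn ℂ (fun t ↦ (g t)⁻¹) (closedBall 0 ε)) (x : ℂ) (n : ℕ) :
    appellPoly (taylorCoeff fun t ↦ (g t)⁻¹) n x =
      1 / (2 * (π : ℂ) * I) * ∮ t in C(0, ε), cexp (x * t) / (g t * t ^ (n + 1)) := by
  rw [show (fun t ↦ cexp (x * t) / (g t * t ^ (n + 1))) =
      fun t ↦ cexp (x * t) * (g t)⁻¹ / t ^ (n + 1) from funext fun t ↦ by ring,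
    circleIntegral_cexp_mul_div_pow hε hg, ← mul_assoc, one_div_mul_cancel two_pi_I_ne_zero,
    one_mul]

theorem hasSum_taylorCoeff_mul_pow {f : ℂ → ℂ} {r : ℝ} (hf : DifferentiableOn ℂ f (ball 0 r))
    {y : ℂ} (hy : ‖y‖ < r) : HasSum (fun j ↦ taylorCoeff f j * y ^ j) (f y) := by
  have h := Complex.hasSum_taylorSeries_on_ball hf (mem_ball_zero_iff.2 hy)
  simp only [sub_zero, smul_eq_mul] at h
  have hterm : (fun j ↦ taylorCoeff f j * y ^ j) =
      fun j ↦ (j ! : ℂ)⁻¹ * (y ^ j * iteratedDeriv j f 0) := by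
    ext j; simp only [taylorCoeff]; ring
  rwa [hterm]

theorem exists_norm_taylorCoeff_mul_pow_le {f : ℂ → ℂ} {r ρ : ℝ}
    (hf : DifferentiableOn ℂ f (ball 0 r)) (hρ : 0 ≤ ρ) (hρr : ρ < r) :
    ∃ M q : ℝ, 0 ≤ q ∧ q < 1 ∧ ∀ j y, ‖y‖ ≤ ρ → ‖taylorCoeff f j * y ^ j‖ ≤ M * q ^ j := by
  obtain ⟨R, hρR, hRr⟩ := exists_between hρr
  have hR : 0 < R := hρ.trans_lt hρR
  have hfR : DiffContOnCl ℂ f (ball 0 R) := hf.diffContOnCl_ball (closedBall_subset_ball hRr)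
  obtain ⟨M, hM⟩ := (isCompact_sphere (0 : ℂ) R).exists_bound_of_continuousOn
    (hfR.continuousOn_ball.mono sphere_subset_closedBall)
  refine ⟨M, ρ / R, by positivity, (div_lt_one hR).2 hρR, fun j y hy ↦ ?_⟩
  have hcoeff : ‖taylorCoeff f j‖ ≤ M / R ^ j := by
    have hj : (0 : ℝ) < j ! := by positivity
    rw [taylorCoeff, norm_mul, norm_inv, Complex.norm_natCast, inv_mul_le_iff₀ hj, mul_div_assoc']
    exact Complex.norm_iteratedDeriv_le_of_forall_mem_sphere_norm_le j hR hfR hM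
  calc ‖taylorCoeff f j * y ^ j‖ ≤ M / R ^ j * ρ ^ j := by
        rw [norm_mul, norm_pow]
        exact mul_le_mul hcoeff (pow_le_pow_left₀ (norm_nonneg y) hy j) (by positivity)
          ((norm_nonneg _).trans hcoeff)
    _ = M * (ρ / R) ^ j := by rw [div_pow]; ring

theorem hasSum_mul_stirlingWeight (b : ℕ → ℂ) {n : ℕ} (hn : n ≠ 0) {x : ℂ} (hx : x ≠ 0) :
    HasSum (fun j ↦ b j * x⁻¹ ^ j * stirlingWeight n j)
      (√(2 * π * n) * appellPoly b n (n * x) / (cexp 1 * x) ^ n) := by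
  have hzero : ∀ j ∉ range (n + 1), b j * x⁻¹ ^ j * stirlingWeight n j = 0 := fun j hj ↦ by
    rw [stirlingWeight, Nat.descFactorial_eq_zero_iff_lt.2 (by simpa using hj)]; simp
  suffices h : √(2 * π * n) * appellPoly b n (n * x) / (cexp 1 * x) ^ n =
      ∑ j ∈ range (n + 1), b j * x⁻¹ ^ j * stirlingWeight n j by
    rw [h]; exact hasSum_sum_of_ne_finset_zero hzero
  rw [appellPoly, ← sum_range_reflect, mul_sum, sum_div]
  refine sum_congr rfl fun j hj ↦ ?_
  obtain ⟨m, rfl⟩ := Nat.exists_eq_add_of_le' (Nat.le_of_lt_succ (mem_range.1 hj))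
  have hdesc : ((m + j).descFactorial j : ℝ) = (m + j) ! / m ! := by
    rw [eq_div_iff (by positivity), ← Nat.cast_mul, mul_comm,
      ← Nat.factorial_mul_descFactorial (Nat.le_add_left j m), Nat.add_sub_cancel]
  rw [show m + j + 1 - 1 - j = m by omega, show m + j - m = j by omega, stirlingWeight, hdesc]
  push_cast [Complex.ofReal_exp]
  have : (m : ℂ) + j ≠ 0 := by exact_mod_cast hn
  have : ((m + j) ! : ℂ) ≠ 0 := Nat.cast_ne_zero.2 (Nat.factorial_ne_zero _)
  simp only [inv_pow, div_pow, mul_pow, pow_add]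
  field_simp

theorem norm_sub_le_of_hasSum_mul_weight {a : ℕ → ℂ} {w : ℕ → ℝ} {s t : ℂ} {M q : ℝ} {n : ℕ}
    (hs : HasSum a s) (ht : HasSum (fun j ↦ a j * w j) t) (hq0 : 0 ≤ q) (hq1 : q < 1)
    (ha : ∀ j, ‖a j‖ ≤ M * q ^ j) (hw : ∀ j, |w j - 1| ≤ ((j : ℝ) ^ 2 + 1) / n) :
    ‖t - s‖ ≤ M * (∑' j : ℕ, ((j : ℝ) ^ 2 + 1) * q ^ j) / n := by
  have hsum : Summable fun j : ℕ ↦ ((j : ℝ) ^ 2 + 1) * q ^ j := by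
    simpa only [add_mul, one_mul] using (summable_pow_mul_geometric_of_norm_lt_one 2
      (by rwa [Real.norm_of_nonneg hq0])).add (summable_geometric_of_lt_one hq0 hq1)
  refine (ht.sub hs).norm_le_of_bounded ((hsum.hasSum.mul_left M).div_const n) fun j ↦ ?_
  calc ‖a j * w j - a j‖ = ‖a j‖ * |w j - 1| := by
        rw [← mul_sub_one, norm_mul, ← Complex.ofReal_one, ← Complex.ofReal_sub,
          Complex.norm_real, Real.norm_eq_abs]
    _ ≤ M * q ^ j * (((j : ℝ) ^ 2 + 1) / n) :=
        mul_le_mul (ha j) (hw j) (abs_nonneg _) ((norm_nonneg _).trans (ha j))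
    _ = M * (((j : ℝ) ^ 2 + 1) * q ^ j) / n := by ring

theorem exists_norm_appellPoly_mul_sub_one_le {g : ℂ → ℂ} {r ρ : ℝ}
    (hg : Differentiable ℂ g) (hgr : ∀ z : ℂ, ‖z‖ < r → g z ≠ 0) (hρ : 0 ≤ ρ) (hρr : ρ < r) :
    ∃ C, ∀ n : ℕ, n ≠ 0 → ∀ x : ℂ, x ≠ 0 → ‖x⁻¹‖ ≤ ρ →
      ‖√(2 * π * n) * appellPoly (taylorCoeff fun t ↦ (g t)⁻¹) n (n * x) * g x⁻¹ /
        (cexp 1 * x) ^ n - 1‖ ≤ C / n := by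
  have hinv : DifferentiableOn ℂ (fun t ↦ (g t)⁻¹) (ball 0 r) :=
    hg.differentiableOn.inv fun z hz ↦ hgr z (mem_ball_zero_iff.1 hz)
  obtain ⟨M, q, hq0, hq1, hM⟩ := exists_norm_taylorCoeff_mul_pow_le hinv hρ hρr
  obtain ⟨G, hG⟩ := (isCompact_closedBall (0 : ℂ) ρ).exists_bound_of_continuousOn
    hg.continuous.continuousOn
  have hG0 : 0 ≤ G := (norm_nonneg _).trans (hG 0 (mem_closedBall_self hρ))
  refine ⟨G * (M * ∑' j : ℕ, ((j : ℝ) ^ 2 + 1) * q ^ j), fun n hn x hx hy ↦ ?_⟩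
  have hgy : g x⁻¹ ≠ 0 := hgr _ (hy.trans_lt hρr)
  have herr := norm_sub_le_of_hasSum_mul_weight
    (hasSum_taylorCoeff_mul_pow hinv (hy.trans_lt hρr)) (hasSum_mul_stirlingWeight _ hn hx)
    hq0 hq1 (fun j ↦ hM j _ hy) (abs_stirlingWeight_sub_one_le hn)
  calc _ = ‖g x⁻¹‖ * ‖√(2 * π * n) * appellPoly (taylorCoeff fun t ↦ (g t)⁻¹) n (n * x) /
        (cexp 1 * x) ^ n - (g x⁻¹)⁻¹‖ := by
        rw [← norm_mul, mul_sub, mul_inv_cancel₀ hgy]; congr 1; ring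
    _ ≤ G * (M * (∑' j : ℕ, ((j : ℝ) ^ 2 + 1) * q ^ j) / n) :=
        mul_le_mul (hG _ (mem_closedBall_zero_iff.2 hy)) herr (norm_nonneg _) hG0
    _ = _ := mul_div_assoc' _ _ _

theorem stmt_4_general (g : ℂ → ℂ) (hg : Differentiable ℂ g)
    (r0 : ℝ) (hr0pos : 0 < r0)
    (hr0 : IsLeast {r : ℝ | ∃ a : ℂ, g a = 0 ∧ ‖a‖ = r} r0)
    (p : ℕ → ℂ → ℂ)
    (hp : ∀ (n : ℕ) (x : ℂ) (ε : ℝ), 0 < ε → ε < r0 →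
      p n x = (1 / (2 * (Real.pi : ℂ) * Complex.I)) *
        ∮ t in C(0, ε), Complex.exp (x * t) / (g t * t ^ (n + 1)))
    (K : Set ℂ) (hK : IsCompact K) (hKx : ∀ x ∈ K, 1 / r0 < ‖x‖) :
    ∃ C > 0, ∀ n : ℕ, 1 ≤ n → ∀ x ∈ K,
      g (1 / x) ≠ 0 ∧
      ‖(Real.sqrt (2 * Real.pi * n) : ℂ) * p n ((n : ℂ) * x) * g (1 / x) /
          (Complex.exp 1 * x) ^ n - 1‖ ≤ C / n := by
  obtain ⟨c, hrc, hcK⟩ := hK.exists_forall_le' continuous_norm.continuousOn hKx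
  have hc : 0 < c := (one_div_pos.2 hr0pos).trans hrc
  have hcr : c⁻¹ < r0 := by rwa [inv_lt_comm₀ hc hr0pos, ← one_div]
  have hgne : ∀ z : ℂ, ‖z‖ < r0 → g z ≠ 0 := fun z hz h0 ↦ (hr0.2 ⟨z, h0, rfl⟩).not_gt hz
  have hinv : DifferentiableOn ℂ (fun t ↦ (g t)⁻¹) (closedBall 0 (r0 / 2)) :=
    hg.differentiableOn.inv fun t ht ↦
      hgne t ((mem_closedBall_zero_iff.1 ht).trans_lt (half_lt_self hr0pos))
  have hp' : ∀ n z, p n z = appellPoly (taylorCoeff fun t ↦ (g t)⁻¹) n z := fun n z ↦ by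
    rw [hp n z _ (half_pos hr0pos) (half_lt_self hr0pos),
      appellPoly_taylorCoeff_inv_eq_circleIntegral (half_pos hr0pos) hinv]
  obtain ⟨C, hC⟩ := exists_norm_appellPoly_mul_sub_one_le hg hgne (inv_nonneg.2 hc.le) hcr
  refine ⟨max C 1, by positivity, fun n hn x hx ↦ ?_⟩
  have hy : ‖x⁻¹‖ ≤ c⁻¹ := by rw [norm_inv]; exact inv_anti₀ hc (hcK x hx)
  rw [one_div, hp']
  have hx0 : x ≠ 0 := norm_pos_iff.1 (hc.trans_le (hcK x hx))
  refine ⟨hgne _ (hy.trans_lt hcr), (hC n (Nat.one_le_iff_ne_zero.1 hn) x hx0 hy).trans ?_⟩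
  gcongr
  exact le_max_left _ _

/-- Let `g` be entire with `g 0 ≠ 0`, having at least one zero, with
minimal zero modulus `r₀ > 0`, and let `p n` be the Appell polynomials of `g`
(given by the contour integral formula). For `K` compact in `{|x| > 1/r₀}` there is
`C > 0` so that for all `n ≥ 1` and `x ∈ K`, `g(1/x) ≠ 0` and
`|√(2πn) pₙ(nx) g(1/x)/(ex)^n − 1| ≤ C/n`. -/
theorem stmt_4 (g : ℂ → ℂ) (hg : Differentiable ℂ g) (hg0 : g 0 ≠ 0)
    (r0 : ℝ) (hr0pos : 0 < r0)
    (hr0 : IsLeast {r : ℝ | ∃ a : ℂ, g a = 0 ∧ ‖a‖ = r} r0)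
    (p : ℕ → ℂ → ℂ)
    (hp : ∀ (n : ℕ) (x : ℂ) (ε : ℝ), 0 < ε → ε < r0 →
      p n x = (1 / (2 * (Real.pi : ℂ) * Complex.I)) *
        ∮ t in C(0, ε), Complex.exp (x * t) / (g t * t ^ (n + 1)))
    (K : Set ℂ) (hK : IsCompact K) (hKx : ∀ x ∈ K, 1 / r0 < ‖x‖) :
    ∃ C > 0, ∀ n : ℕ, 1 ≤ n → ∀ x ∈ K,
      g (1 / x) ≠ 0 ∧
      ‖(Real.sqrt (2 * Real.pi * n) : ℂ) * p n ((n : ℂ) * x) * g (1 / x) /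
          (Complex.exp 1 * x) ^ n - 1‖ ≤ C / n :=
  stmt_4_general g hg r0 hr0pos hr0 p hp K hK hKx
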